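/- Let A generate a bounded C_0-semigroup with bound N on a Banach space X, let q ≥ 1 and n ∈ ℕ. Define H_{n,q} = Σ_{k=q}^{2q-1} h_k^q (√n (√n - A)^{-1})^k with h_k^q = C(2q-1,k)C(k-1,k-q)(-1)^{k-q}. Then there exist constants C(q,N) independent of n such that for all v ∈ 𝒟(A^q): ‖H_{n,q} v - v‖ ≤ C(q,N) n^{-q/2} ‖A^q v‖, and ‖H_{n,q}‖ ≤ C(q,N). -/

import Mathlib

open Filter Topology MeasureTheory

/-- A (bounded) strongly continuous one-parameter semigroup on `X` with bound `N`. -/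
structure IsC0Semigroup {X : Type*} [NormedAddCommGroup X] [NormedSpace ℂ X]
    (T : ℝ → X →L[ℂ] X) (N : ℝ) : Prop where
  map_zero : T 0 = 1
  map_add : ∀ s t : ℝ, 0 ≤ s → 0 ≤ t → T (s + t) = (T s).comp (T t)
  strong_cont : ∀ x : X, ContinuousOn (fun t => T t x) (Set.Ici 0)
  norm_bound : ∀ t : ℝ, 0 ≤ t → ‖T t‖ ≤ N

/-- `A` (a linear extension of) the generator of the semigroup `T`, with domain `dom`. -/
structure IsGeneratorOf {X : Type*} [NormedAddCommGroup X] [NormedSpace ℂ X]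
    (A : X →ₗ[ℂ] X) (dom : Set X) (T : ℝ → X →L[ℂ] X) : Prop where
  deriv_mem : ∀ x ∈ dom,
    Tendsto (fun t : ℝ => (t : ℂ)⁻¹ • (T t x - x)) (𝓝[>] 0) (𝓝 (A x))
  mem_of_deriv : ∀ x y : X,
    Tendsto (fun t : ℝ => (t : ℂ)⁻¹ • (T t x - x)) (𝓝[>] 0) (𝓝 y) → x ∈ dom

/-- `R = (μ - A)⁻¹` : the resolvent of `A` at `μ`. -/
def IsResolventOf {X : Type*} [NormedAddCommGroup X] [NormedSpace ℂ X]
    (R : X →L[ℂ] X) (μ : ℂ) (A : X →ₗ[ℂ] X) (dom : Set X) : Prop :=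
  (∀ x : X, R x ∈ dom ∧ μ • R x - A (R x) = x) ∧
  (∀ x ∈ dom, R (μ • x - A x) = x)

/-- The coefficients `h_k^q = C(2q-1,k) C(k-1,k-q) (-1)^{k-q}`. -/
noncomputable def hCoef (q k : ℕ) : ℂ :=
  ((2 * q - 1).choose k : ℂ) * ((k - 1).choose (k - q) : ℂ) * (-1) ^ (k - q)

/-!
Put `F = √n (√n - A)⁻¹`. Expanding `1 = (F + (1 - F)) ^ (2q-1)` binomially, the terms with
`k ≥ q` add up to `∑ h_k^q F^k`, while those with `k < q` all contain the factor `(1 - F)^q`;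
hence `H_{n,q} = 1 - B (1 - F)^q` with `B` a polynomial in `F`. The Laplace-transform
representation `(μ - A)⁻¹ x = ∫₀^∞ e^{-μt} T(t) x dt` gives `‖(μ - A)⁻¹‖ ≤ N / μ`, so `‖F‖ ≤ N`
and `B`, `H_{n,q}` are bounded independently of `n`. On `𝒟(A^q)` the resolvent identity
`(F - 1) v = (√n - A)⁻¹ A v` yields `‖(1 - F)^q v‖ ≤ (N / √n)^q ‖A^q v‖`.
-/

section HCoef

open Finset

lemma sum_Icc_neg_one_pow_mul_choose {R : Type*} [CommRing R] {q m : ℕ} (hq : 1 ≤ q)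
    (hqm : q ≤ m) :
    ∑ k ∈ Icc q m, (-1 : R) ^ k * m.choose k = (-1) ^ q * (m - 1).choose (q - 1) := by
  obtain ⟨n, rfl⟩ : ∃ n, m = n + 1 := ⟨m - 1, by omega⟩
  obtain ⟨j, rfl⟩ : ∃ j, q = j + 1 := ⟨q - 1, by omega⟩
  have hfull : ∑ k ∈ range (n + 1 + 1), (-1 : R) ^ k * (n + 1).choose k = 0 := by
    simpa using congrArg (Int.cast : ℤ → R) (Int.alternating_sum_range_choose_of_ne n.succ_ne_zero)
  have hhead : ∑ k ∈ range (j + 1), (-1 : R) ^ k * (n + 1).choose k = (-1) ^ j * n.choose j := by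
    simpa using congrArg (Int.cast : ℤ → R) (Int.alternating_sum_range_choose_eq_choose (n := n))
  rw [← sum_range_add_sum_Ico _ (by omega : j + 1 ≤ n + 1 + 1), hhead,
    Ico_add_one_right_eq_Icc] at hfull
  simp only [Nat.add_sub_cancel]
  linear_combination hfull

lemma neg_one_pow_sub {R : Type*} [Monoid R] [HasDistribNeg R] {m k : ℕ} (h : k ≤ m) :
    (-1 : R) ^ (m - k) = (-1) ^ m * (-1) ^ k := by
  calc (-1 : R) ^ (m - k) = (-1) ^ (m - k) * ((-1) ^ k * (-1) ^ k) := by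
        rw [← pow_add, Even.neg_one_pow ⟨k, rfl⟩, mul_one]
    _ = (-1) ^ m * (-1) ^ k := by rw [← mul_assoc, ← pow_add, Nat.sub_add_cancel h]

lemma hCoef_eq_sum {q m : ℕ} (hq : 1 ≤ q) (hqm : q ≤ m) :
    hCoef q m = ∑ k ∈ Icc q m,
      ((2 * q - 1).choose k : ℂ) * ((-1) ^ (m - k) * (2 * q - 1 - k).choose (m - k)) := by
  have hterm : ∀ k ∈ Icc q m,
      ((2 * q - 1).choose k : ℂ) * ((-1) ^ (m - k) * (2 * q - 1 - k).choose (m - k))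
        = (2 * q - 1).choose m * (-1) ^ m * ((-1) ^ k * m.choose k) := by
    intro k hk
    have hkm := (mem_Icc.1 hk).2
    have hchoose : ((2 * q - 1).choose k : ℂ) * (2 * q - 1 - k).choose (m - k)
        = (2 * q - 1).choose m * m.choose k := by
      exact_mod_cast (Nat.choose_mul hkm).symm
    rw [neg_one_pow_sub hkm]
    linear_combination (-1 : ℂ) ^ m * (-1) ^ k * hchoose
  rw [sum_congr rfl hterm, ← mul_sum, sum_Icc_neg_one_pow_mul_choose hq hqm, hCoef,
    neg_one_pow_sub hqm, ← Nat.choose_symm_of_eq_add (by omega : m - 1 = (q - 1) + (m - q))]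
  ring

lemma pow_mul_one_sub_pow_eq_sum {R : Type*} [CommRing R] (z : R) {k p : ℕ} (hkp : k ≤ p) :
    z ^ k * (1 - z) ^ (p - k) = ∑ m ∈ Icc k p, (-1) ^ (m - k) * (p - k).choose (m - k) * z ^ m := by
  rw [show 1 - z = -z + 1 by ring, add_pow, mul_sum, ← Ico_add_one_right_eq_Icc,
    sum_Ico_eq_sum_range, show p + 1 - k = p - k + 1 by omega]
  refine sum_congr rfl fun j _ => ?_
  rw [Nat.add_sub_cancel_left, neg_pow, pow_add]
  ring

lemma sum_Icc_choose_mul_pow_mul_one_sub_pow_eq_sum_hCoef {q : ℕ} (hq : 1 ≤ q) (z : ℂ) :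
    ∑ k ∈ Icc q (2 * q - 1), ((2 * q - 1).choose k : ℂ) * (z ^ k * (1 - z) ^ (2 * q - 1 - k))
      = ∑ m ∈ Icc q (2 * q - 1), hCoef q m * z ^ m := by
  calc _ = ∑ k ∈ Icc q (2 * q - 1), ∑ m ∈ Icc k (2 * q - 1), ((2 * q - 1).choose k : ℂ) *
          ((-1) ^ (m - k) * (2 * q - 1 - k).choose (m - k)) * z ^ m := by
        refine sum_congr rfl fun k hk => ?_
        rw [pow_mul_one_sub_pow_eq_sum z (mem_Icc.1 hk).2, mul_sum]
        exact sum_congr rfl fun m _ => by ring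
    _ = ∑ m ∈ Icc q (2 * q - 1), ∑ k ∈ Icc q m, ((2 * q - 1).choose k : ℂ) *
          ((-1) ^ (m - k) * (2 * q - 1 - k).choose (m - k)) * z ^ m :=
        sum_comm' fun k m => by simp only [mem_Icc]; omega
    _ = _ := by
        refine sum_congr rfl fun m hm => ?_
        rw [← sum_mul, ← hCoef_eq_sum hq (mem_Icc.1 hm).1]

lemma sum_hCoef_mul_pow (q : ℕ) (z : ℂ) :
    ∑ k ∈ Icc q (2 * q - 1), hCoef q k * z ^ k = 1 -
      (∑ k ∈ range q, ((2 * q - 1).choose k : ℂ) * (z ^ k * (1 - z) ^ (q - 1 - k))) * (1 - z) ^ q := by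
  rcases Nat.eq_zero_or_pos q with rfl | hq
  · simp [hCoef]
  have hlow : ∑ k ∈ range q, ((2 * q - 1).choose k : ℂ) * (z ^ k * (1 - z) ^ (2 * q - 1 - k))
      = (∑ k ∈ range q, ((2 * q - 1).choose k : ℂ) * (z ^ k * (1 - z) ^ (q - 1 - k))) *
          (1 - z) ^ q := by
    rw [sum_mul]
    refine sum_congr rfl fun k hk => ?_
    rw [show 2 * q - 1 - k = (q - 1 - k) + q by have := mem_range.1 hk; omega, pow_add]
    ring
  have hbinom : ∑ k ∈ range (2 * q - 1 + 1),
      ((2 * q - 1).choose k : ℂ) * (z ^ k * (1 - z) ^ (2 * q - 1 - k)) = 1 := by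
    have h := add_pow z (1 - z) (2 * q - 1)
    rw [add_sub_cancel, one_pow] at h
    exact (sum_congr rfl fun k _ => by ring).trans h.symm
  rw [← sum_range_add_sum_Ico _ (by omega : q ≤ 2 * q - 1 + 1), Ico_add_one_right_eq_Icc,
    hlow, sum_Icc_choose_mul_pow_mul_one_sub_pow_eq_sum_hCoef hq] at hbinom
  linear_combination hbinom

noncomputable def hCofactor {E : Type*} [Ring E] [Algebra ℂ E] (q : ℕ) (F : E) : E :=
  ∑ k ∈ range q, ((2 * q - 1).choose k : ℂ) • (F ^ k * (1 - F) ^ (q - 1 - k))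

lemma sum_hCoef_smul_pow {E : Type*} [Ring E] [Algebra ℂ E] (q : ℕ) (F : E) :
    ∑ k ∈ Icc q (2 * q - 1), hCoef q k • F ^ k = 1 - hCofactor q F * (1 - F) ^ q := by
  open Polynomial in
  have hpoly : ∑ k ∈ Icc q (2 * q - 1), hCoef q k • (X : ℂ[X]) ^ k
      = 1 - hCofactor q (X : ℂ[X]) * (1 - X) ^ q :=
    Polynomial.funext fun z => by
      simpa [hCofactor, eval_finsetSum] using sum_hCoef_mul_pow q z
  simpa [hCofactor, map_sum] using congrArg (Polynomial.aeval F) hpoly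

lemma norm_pow_le_of_norm_le {E : Type*} [SeminormedRing E] (h1 : ‖(1 : E)‖ ≤ 1) {a : E} {K : ℝ}
    (ha : ‖a‖ ≤ K) : ∀ n : ℕ, ‖a ^ n‖ ≤ K ^ n
  | 0 => by simpa using h1
  | n + 1 => (norm_pow_le' a n.succ_pos).trans (pow_le_pow_left₀ (norm_nonneg a) ha _)

lemma norm_hCofactor_le {E : Type*} [SeminormedRing E] [NormedAlgebra ℂ E] (h1 : ‖(1 : E)‖ ≤ 1)
    {F : E} {K : ℝ} (hF : ‖F‖ ≤ K) (h1F : ‖1 - F‖ ≤ K) (q : ℕ) :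
    ‖hCofactor q F‖ ≤ (∑ k ∈ range q, ((2 * q - 1).choose k : ℝ)) * K ^ (q - 1) := by
  rw [sum_mul]
  refine (norm_sum_le _ _).trans (sum_le_sum fun k hk => ?_)
  have hsplit : K ^ (q - 1) = K ^ k * K ^ (q - 1 - k) := by
    rw [← pow_add]; congr 1; have := mem_range.1 hk; omega
  have hK : 0 ≤ K := (norm_nonneg F).trans hF
  rw [norm_smul, Complex.norm_natCast, hsplit]
  gcongr
  exact (norm_mul_le _ _).trans (mul_le_mul (norm_pow_le_of_norm_le h1 hF k)
    (norm_pow_le_of_norm_le h1 h1F _) (norm_nonneg _) (by positivity))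

lemma norm_sum_hCoef_smul_pow_le {E : Type*} [SeminormedRing E] [NormedAlgebra ℂ E]
    (h1 : ‖(1 : E)‖ ≤ 1) {F : E} {K : ℝ} (hF : ‖F‖ ≤ K) (h1F : ‖1 - F‖ ≤ K) (q : ℕ) :
    ‖∑ k ∈ Icc q (2 * q - 1), hCoef q k • F ^ k‖
      ≤ 1 + (∑ k ∈ range q, ((2 * q - 1).choose k : ℝ)) * K ^ (q - 1) * K ^ q := by
  rw [sum_hCoef_smul_pow]
  refine (norm_sub_le _ _).trans (add_le_add h1 ((norm_mul_le _ _).trans ?_))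
  have hK : 0 ≤ K := (norm_nonneg F).trans hF
  exact mul_le_mul (norm_hCofactor_le h1 hF h1F q) (norm_pow_le_of_norm_le h1 h1F q)
    (norm_nonneg _) (by positivity)

lemma norm_sum_hCoef_smul_pow_apply_sub_le {X : Type*} [NormedAddCommGroup X] [NormedSpace ℂ X]
    (q : ℕ) (F : X →L[ℂ] X) (v : X) :
    ‖(∑ k ∈ Icc q (2 * q - 1), hCoef q k • F ^ k) v - v‖
      ≤ ‖hCofactor q F‖ * ‖((1 - F) ^ q) v‖ := by
  rw [sum_hCoef_smul_pow]
  simpa using (hCofactor q F).le_opNorm (((1 - F) ^ q) v)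

end HCoef

section Semigroup

open Set

noncomputable def semigroupLaplace {X : Type*} [NormedAddCommGroup X] [NormedSpace ℂ X]
    (T : ℝ → X →L[ℂ] X) (μ : ℝ) (x : X) : X :=
  ∫ t in Ioi 0, Real.exp (-μ * t) • T t x

namespace IsC0Semigroup

variable {X : Type*} [NormedAddCommGroup X] [NormedSpace ℂ X] {T : ℝ → X →L[ℂ] X} {N μ : ℝ}

lemma bound_nonneg (hT : IsC0Semigroup T N) : 0 ≤ N :=
  (norm_nonneg _).trans (hT.norm_bound 0 le_rfl)

lemma norm_exp_smul_apply_le (hT : IsC0Semigroup T N) {t : ℝ} (ht : 0 ≤ t) (x : X) :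
    ‖Real.exp (-μ * t) • T t x‖ ≤ N * ‖x‖ * Real.exp (-μ * t) := by
  rw [norm_smul, Real.norm_of_nonneg (Real.exp_pos _).le, mul_comm]
  gcongr
  exact (T t).le_of_opNorm_le (hT.norm_bound t ht) x

lemma continuousOn_exp_smul_apply (hT : IsC0Semigroup T N) (μ : ℝ) (x : X) :
    ContinuousOn (fun t => Real.exp (-μ * t) • T t x) (Ici 0) :=
  (Real.continuous_exp.comp (continuous_const.mul continuous_id)).continuousOn.smul
    (hT.strong_cont x)

lemma integrableOn_exp_smul_apply (hT : IsC0Semigroup T N) (hμ : 0 < μ) (x : X) :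
    IntegrableOn (fun t => Real.exp (-μ * t) • T t x) (Ioi 0) := by
  refine Integrable.mono' ((exp_neg_integrableOn_Ioi 0 hμ).const_mul (N * ‖x‖))
    ((hT.continuousOn_exp_smul_apply μ x).mono Ioi_subset_Ici_self
      |>.aestronglyMeasurable measurableSet_Ioi) ?_
  filter_upwards [ae_restrict_mem measurableSet_Ioi] with t ht
  exact hT.norm_exp_smul_apply_le (le_of_lt ht) x

lemma norm_laplace_le (hT : IsC0Semigroup T N) (hμ : 0 < μ) (x : X) :
    ‖semigroupLaplace T μ x‖ ≤ N / μ * ‖x‖ := by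
  have hbound := norm_integral_le_of_norm_le ((exp_neg_integrableOn_Ioi 0 hμ).const_mul (N * ‖x‖))
    ((ae_restrict_mem measurableSet_Ioi).mono fun t ht =>
      hT.norm_exp_smul_apply_le (μ := μ) (le_of_lt ht) x)
  rw [integral_const_mul, integral_exp_mul_Ioi (neg_lt_zero.2 hμ)] at hbound
  refine hbound.trans_eq ?_
  simp only [mul_zero, Real.exp_zero]
  field_simp

variable [CompleteSpace X]

lemma apply_laplace (hT : IsC0Semigroup T N) (hμ : 0 < μ) (x : X) {h : ℝ} (hh : 0 ≤ h) :
    T h (semigroupLaplace T μ x)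
      = Real.exp (μ * h) • ∫ t in Ioi h, Real.exp (-μ * t) • T t x := by
  rw [semigroupLaplace, ← (T h).integral_comp_comm (hT.integrableOn_exp_smul_apply hμ x),
    ← (measurePreserving_add_right volume h).setIntegral_preimage_emb
      (measurableEmbedding_addRight h) (fun t => Real.exp (-μ * t) • T t x) (Ioi h),
    preimage_add_const_Ioi, sub_self, ← integral_smul]
  refine setIntegral_congr_fun measurableSet_Ioi fun t ht => ?_
  rw [(T h).map_smul_of_tower, smul_smul, ← Real.exp_add, add_comm t h,
    hT.map_add h t hh (le_of_lt ht)]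
  congr 2
  ring

lemma hasDerivWithinAt_apply_laplace (hT : IsC0Semigroup T N) (hμ : 0 < μ) (x : X) :
    HasDerivWithinAt (fun h => T h (semigroupLaplace T μ x))
      ((μ : ℂ) • semigroupLaplace T μ x - x) (Ici 0) 0 := by
  set f := fun t => Real.exp (-μ * t) • T t x
  set J := semigroupLaplace T μ x
  have hf := hT.continuousOn_exp_smul_apply μ x
  have hf0 : f 0 = x := by simp [f, hT.map_zero]
  have htail : HasDerivWithinAt (fun h => J - ∫ t in (0 : ℝ)..h, f t) (-x) (Ici 0) 0 := by
    refine hf0 ▸ (intervalIntegral.integral_hasDerivWithinAt_right (by simp)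
      ((hf.mono Ioi_subset_Ici_self).stronglyMeasurableAtFilter_nhdsWithin measurableSet_Ioi 0)
      ((hf 0 self_mem_Ici).mono Ioi_subset_Ici_self)).const_sub J
  have hexp : HasDerivWithinAt (fun h => Real.exp (μ * h)) μ (Ici 0) 0 := by
    simpa using ((hasDerivAt_id (0 : ℝ)).const_mul μ).exp.hasDerivWithinAt
  -- on `[0, ∞)`, `T h J = e^{μh} • (J - ∫₀ʰ f)`
  refine ((hexp.smul htail).congr (fun h hh => ?_) ?_).congr_deriv ?_
  · show _ = Real.exp (μ * h) • (J - ∫ t in (0 : ℝ)..h, f t)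
    rw [hT.apply_laplace hμ x hh, ← intervalIntegral.integral_Ioi_sub_Ioi
      (hT.integrableOn_exp_smul_apply hμ x) hh]
    exact congrArg _ (sub_sub_cancel _ _).symm
  · simp [hT.map_zero]
  · simp only [mul_zero, Real.exp_zero, smul_neg, one_smul, intervalIntegral.integral_same,
      sub_zero, Complex.coe_smul]
    abel

end IsC0Semigroup

variable {X : Type*} [NormedAddCommGroup X] [NormedSpace ℂ X] {T : ℝ → X →L[ℂ] X} {N μ : ℝ}
  {A : X →ₗ[ℂ] X} {dom : Set X}

lemma IsGeneratorOf.laplace_mem_and_apply [CompleteSpace X] (hA : IsGeneratorOf A dom T)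
    (hT : IsC0Semigroup T N) (hμ : 0 < μ) (x : X) :
    semigroupLaplace T μ x ∈ dom ∧
      A (semigroupLaplace T μ x) = (μ : ℂ) • semigroupLaplace T μ x - x := by
  have hslope := hasDerivWithinAt_iff_tendsto_slope.1 (hT.hasDerivWithinAt_apply_laplace hμ x)
  rw [Ici_sdiff_left] at hslope
  have hquot : Tendsto (fun t : ℝ => (t : ℂ)⁻¹ •
      (T t (semigroupLaplace T μ x) - semigroupLaplace T μ x)) (𝓝[>] 0)
      (𝓝 ((μ : ℂ) • semigroupLaplace T μ x - x)) :=
    hslope.congr fun t => by simp [slope_fun_def, hT.map_zero, ← Complex.coe_smul]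
  have hmem := hA.mem_of_deriv _ _ hquot
  exact ⟨hmem, tendsto_nhds_unique (hA.deriv_mem _ hmem) hquot⟩

namespace IsResolventOf

variable {R : X →L[ℂ] X}

lemma eq_laplace [CompleteSpace X] (hR : IsResolventOf R μ A dom) (hA : IsGeneratorOf A dom T)
    (hT : IsC0Semigroup T N) (hμ : 0 < μ) (x : X) : R x = semigroupLaplace T μ x := by
  obtain ⟨hmem, happly⟩ := hA.laplace_mem_and_apply hT hμ x
  simpa [happly] using hR.2 _ hmem

lemma opNorm_le [CompleteSpace X] (hR : IsResolventOf R μ A dom) (hA : IsGeneratorOf A dom T)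
    (hT : IsC0Semigroup T N) (hμ : 0 < μ) : ‖R‖ ≤ N / μ :=
  R.opNorm_le_bound (div_nonneg hT.bound_nonneg hμ.le) fun x =>
    hR.eq_laplace hA hT hμ x ▸ hT.norm_laplace_le hμ x

lemma norm_ofReal_smul_le [CompleteSpace X] (hR : IsResolventOf R μ A dom)
    (hA : IsGeneratorOf A dom T) (hT : IsC0Semigroup T N) (hμ : 0 < μ) : ‖(μ : ℂ) • R‖ ≤ N := by
  rw [norm_smul, Complex.norm_real, Real.norm_of_nonneg hμ.le]
  exact (le_div_iff₀' hμ).1 (hR.opNorm_le hA hT hμ)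

lemma smul_sub_one_apply {μ : ℂ} (hR : IsResolventOf R μ A dom) {v : X} (hv : v ∈ dom) :
    (μ • R - 1) v = R (A v) := by
  have h := hR.2 v hv
  rw [map_sub, map_smul, sub_eq_iff_eq_add'] at h
  simp [h]

lemma smul_sub_one_pow_apply {μ : ℂ} (hR : IsResolventOf R μ A dom) (j : ℕ) {v : X}
    (hv : ∀ i < j, (A ^ i) v ∈ dom) : ((μ • R - 1) ^ j) v = (R ^ j) ((A ^ j) v) := by
  induction j generalizing v with
  | zero => rfl
  | succ j ih =>
    have hcomm : Commute ((μ • R - 1) ^ j) R :=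
      ((Commute.refl R).smul_left μ |>.sub_left (Commute.one_left R)).pow_left j
    calc ((μ • R - 1) ^ (j + 1)) v = ((μ • R - 1) ^ j) (R (A v)) := by
          rw [pow_succ, mul_apply_eq_comp, hR.smul_sub_one_apply (by simpa using hv 0 (by omega))]
      _ = R (((μ • R - 1) ^ j) (A v)) := congrArg (· (A v)) hcomm.eq
      _ = R ((R ^ j) ((A ^ j) (A v))) := by
          rw [ih fun i hi => by simpa [pow_succ] using hv (i + 1) (by omega)]
      _ = (R ^ (j + 1)) ((A ^ (j + 1)) v) := by rw [pow_succ A, pow_succ' R]; rfl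

lemma norm_one_sub_smul_pow_apply_le {μ : ℂ}
    (hR : IsResolventOf R μ A dom) {M : ℝ} (hM : ‖R‖ ≤ M) {j : ℕ} {v : X}
    (hv : ∀ i < j, (A ^ i) v ∈ dom) : ‖((1 - μ • R) ^ j) v‖ ≤ M ^ j * ‖(A ^ j) v‖ := by
  have hsign : ‖((1 - μ • R) ^ j) v‖ = ‖((μ • R - 1) ^ j) v‖ := by
    rcases j.even_or_odd with hj | hj
    · rw [← neg_sub, hj.neg_pow]
    · rw [← neg_sub, hj.neg_pow, neg_apply, norm_neg]
  rw [hsign, hR.smul_sub_one_pow_apply j hv]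
  exact ((R ^ j).le_opNorm _).trans (mul_le_mul_of_nonneg_right
    (norm_pow_le_of_norm_le ContinuousLinearMap.norm_id_le hM j) (norm_nonneg _))

end IsResolventOf

end Semigroup

theorem stmt_10_general {X : Type*} [NormedAddCommGroup X] [NormedSpace ℂ X] [CompleteSpace X]
    (T : ℝ → X →L[ℂ] X) (N : ℝ) (hT : IsC0Semigroup T N)
    (A : X →ₗ[ℂ] X) (dom : Set X) (hA : IsGeneratorOf A dom T)
    (q : ℕ) :
    ∃ C : ℝ, ∀ n : ℕ, 1 ≤ n → ∀ Rn : X →L[ℂ] X,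
      IsResolventOf Rn (Real.sqrt n : ℂ) A dom →
      ‖∑ k ∈ Finset.Icc q (2 * q - 1), hCoef q k • ((Real.sqrt n : ℂ) • Rn) ^ k‖ ≤ C ∧
      ∀ v : X, (∀ i < q, (A ^ i) v ∈ dom) →
        ‖(∑ k ∈ Finset.Icc q (2 * q - 1), hCoef q k • ((Real.sqrt n : ℂ) • Rn) ^ k) v - v‖
          ≤ C / (n : ℝ) ^ ((q : ℝ) / 2) * ‖(A ^ q) v‖ := by
  set c := (∑ k ∈ Finset.range q, ((2 * q - 1).choose k : ℝ)) * (N + 1) ^ (q - 1)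
  refine ⟨1 + c * (N + 1) ^ q, fun n hn R hR => ?_⟩
  have h1 : ‖(1 : X →L[ℂ] X)‖ ≤ 1 := ContinuousLinearMap.norm_id_le
  have hμ : 0 < √(n : ℝ) := Real.sqrt_pos.2 (by exact_mod_cast hn)
  have hRle : ‖R‖ ≤ N / √n := hR.opNorm_le hA hT hμ
  have hF : ‖(√(n : ℝ) : ℂ) • R‖ ≤ N := hR.norm_ofReal_smul_le hA hT hμ
  have h1F : ‖1 - (√(n : ℝ) : ℂ) • R‖ ≤ N + 1 := (norm_sub_le _ _).trans (by linarith)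
  refine ⟨norm_sum_hCoef_smul_pow_le h1 (by linarith) h1F q, fun v hv => ?_⟩
  have hc : ‖hCofactor q ((√(n : ℝ) : ℂ) • R)‖ ≤ c :=
    norm_hCofactor_le h1 (by linarith) h1F q
  have hNc : c * N ^ q ≤ 1 + c * (N + 1) ^ q := by
    have := mul_le_mul_of_nonneg_left
      (pow_le_pow_left₀ hT.bound_nonneg (by linarith : N ≤ N + 1) q) ((norm_nonneg _).trans hc)
    linarith
  calc _ ≤ c * ((N / √n) ^ q * ‖(A ^ q) v‖) :=
        (norm_sum_hCoef_smul_pow_apply_sub_le q _ v).trans (mul_le_mul hc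
          (hR.norm_one_sub_smul_pow_apply_le hRle hv) (norm_nonneg _) ((norm_nonneg _).trans hc))
    _ = c * N ^ q / √n ^ q * ‖(A ^ q) v‖ := by ring
    _ ≤ (1 + c * (N + 1) ^ q) / (n : ℝ) ^ ((q : ℝ) / 2) * ‖(A ^ q) v‖ := by
        rw [Real.rpow_div_two_eq_sqrt _ (Nat.cast_nonneg n), Real.rpow_natCast]
        gcongr

/-- For `H_{n,q} = Σ_{k=q}^{2q-1} h_k^q (√n (√n - A)^{-1})^k` there are constants
`C(q,N)` independent of `n` with `‖H_{n,q} v - v‖ ≤ C(q,N) n^{-q/2} ‖A^q v‖` for `v ∈ 𝒟(A^q)`,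
and `‖H_{n,q}‖ ≤ C(q,N)`. -/
theorem stmt_10 {X : Type*} [NormedAddCommGroup X] [NormedSpace ℂ X] [CompleteSpace X]
    (T : ℝ → X →L[ℂ] X) (N : ℝ) (hT : IsC0Semigroup T N)
    (A : X →ₗ[ℂ] X) (dom : Set X) (hA : IsGeneratorOf A dom T)
    (q : ℕ) (hq : 1 ≤ q) :
    ∃ C : ℝ, ∀ n : ℕ, 1 ≤ n → ∀ Rn : X →L[ℂ] X,
      IsResolventOf Rn (Real.sqrt n : ℂ) A dom →
      ‖∑ k ∈ Finset.Icc q (2 * q - 1), hCoef q k • ((Real.sqrt n : ℂ) • Rn) ^ k‖ ≤ C ∧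
      ∀ v : X, (∀ i < q, (A ^ i) v ∈ dom) →
        ‖(∑ k ∈ Finset.Icc q (2 * q - 1), hCoef q k • ((Real.sqrt n : ℂ) • Rn) ^ k) v - v‖
          ≤ C / (n : ℝ) ^ ((q : ℝ) / 2) * ‖(A ^ q) v‖ :=
  stmt_10_general T N hT A dom hA q
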